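/- arXiv:1507.04070 — 2 statements merged into one kernel-verified Lean document; each statement's English description precedes it below -/
import Mathlib

section
/- For the eight-vertex model Wang tile set B₈ = B₆ ∪ {(0,1,0,1), (1,0,1,0)} over symbols {0,1}, where B₆ = {(0,0,0,0),(1,1,1,1),(0,1,1,0),(1,0,0,1),(1,1,0,0),(0,0,1,1)} (tiles written as (b,l,t,r)), the spatial entropy is exactly h(B₈) = log 2. -/
open Filter

/-- A symbol (color) for two-symbol Wang tiles. -/
abbrev Col : Type := Fin 2

/-- A Wang tile `(b, l, t, r)`: colors of the bottom, left, top and right edges. -/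
abbrev WTile : Type := Col × Col × Col × Col

def WTile.b (T : WTile) : Col := T.1
def WTile.l (T : WTile) : Col := T.2.1
def WTile.t (T : WTile) : Col := T.2.2.1
def WTile.r (T : WTile) : Col := T.2.2.2

/-- An edge coloring of the `m × n` rectangular lattice `Z_{m×n}`:
colors of the horizontal edges (indexed by their left endpoint `(i,j)`,
`0 ≤ i ≤ m-2`, `0 ≤ j ≤ n-1`) and of the vertical edges (indexed by their
bottom endpoint `(i,j)`, `0 ≤ i ≤ m-1`, `0 ≤ j ≤ n-2`). -/
def Coloring (m n : ℕ) : Type :=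
  (Fin (m - 1) × Fin n → Col) × (Fin m × Fin (n - 1) → Col)

/-- The Wang tile `(b,l,t,r)` carried by the unit square with bottom-left corner `(i,j)`. -/
def Coloring.square {m n : ℕ} (c : Coloring m n) (i : Fin (m - 1)) (j : Fin (n - 1)) :
    WTile :=
  (c.1 (i, ⟨j.1, by have := j.2; omega⟩),
   c.2 (⟨i.1, by have := i.2; omega⟩, j),
   c.1 (i, ⟨j.1 + 1, by have := j.2; omega⟩),
   c.2 (⟨i.1 + 1, by have := i.2; omega⟩, j))

/-- A coloring is `B`-admissible if every unit square carries a tile of `B`. -/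
def Admissible (B : Finset WTile) {m n : ℕ} (c : Coloring m n) : Prop :=
  ∀ i j, c.square i j ∈ B

/-- `Γ_{m×n}(B)`: the number of `B`-admissible edge colorings of the `m × n` lattice. -/
noncomputable def Gamma (B : Finset WTile) (m n : ℕ) : ℕ :=
  Nat.card {c : Coloring m n // Admissible B c}

/-- The spatial entropy `h(B) = lim_{m,n→∞} log Γ_{m×n}(B) / (mn)`. -/
noncomputable def entropy (B : Finset WTile) : ℝ :=
  limsup (fun p : ℕ × ℕ => Real.log (Gamma B p.1 p.2) / (p.1 * p.2)) (atTop ×ˢ atTop)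

/-- The eight-vertex model tile set. -/
def eightVertex : Finset WTile :=
  {((0 : Col), (0 : Col), (0 : Col), (0 : Col)), (1, 1, 1, 1), (0, 1, 1, 0),
    (1, 0, 0, 1), (1, 1, 0, 0), (0, 0, 1, 1), (0, 1, 0, 1), (1, 0, 1, 0)}

-- membership criterion
lemma mem_eightVertex (T : WTile) : T ∈ eightVertex ↔ T.2.2.1 = T.1 + T.2.1 + T.2.2.2 := by
  revert T; decide

section Count
variable (a b : ℕ)

abbrev D := (Fin a → Col) × (Fin (a + 1) × Fin b → Col)

/-- partial sum of vertical-edge contributions in row `i`, up to column `t`. -/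
def S (d : D a b) (i : Fin a) (t : ℕ) : Col :=
  ∑ k : Fin b, if (k : ℕ) < t then
    d.2 (⟨i.1, by omega⟩, k) + d.2 (⟨i.1 + 1, by omega⟩, k) else 0

lemma S_zero (d : D a b) (i : Fin a) : S a b d i 0 = 0 := by
  simp [S]

lemma S_succ (d : D a b) (i : Fin a) (j : Fin b) :
    S a b d i (j.1 + 1) = S a b d i j.1
      + (d.2 (⟨i.1, by omega⟩, j) + d.2 (⟨i.1 + 1, by omega⟩, j)) := by
  unfold S
  rw [← Finset.sum_filter, ← Finset.sum_filter]
  have h : Finset.univ.filter (fun k : Fin b => (k : ℕ) < j.1 + 1)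
      = insert j (Finset.univ.filter (fun k : Fin b => (k : ℕ) < j.1)) := by
    ext k
    simp [Fin.ext_iff]
    omega
  rw [h, Finset.sum_insert (by simp)]
  exact add_comm _ _

def build (d : D a b) : Coloring (a + 1) (b + 1) :=
  (fun ij => d.1 ij.1 + S a b d ij.1 ij.2.1, d.2)

lemma admissible_build (d : D a b) : Admissible eightVertex (build a b d) := by
  intro i j
  rw [mem_eightVertex]
  show (build a b d).1 (i, ⟨j.1 + 1, _⟩) = _
  simp only [build, Coloring.square]
  rw [S_succ a b d i j]
  simp only [add_assoc]

lemma build_eq {c : Coloring (a + 1) (b + 1)} (hc : Admissible eightVertex c) :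
    build a b (fun i => c.1 (i, 0), c.2) = c := by
  unfold build
  refine Prod.ext (funext fun ij => ?_) rfl
  obtain ⟨i, j⟩ := ij
  show c.1 (i, 0) + S a b _ i j.1 = c.1 (i, j)
  obtain ⟨jv, hj⟩ := j
  induction jv with
  | zero => simp [S_zero]
  | succ t ih =>
    have ht : t < b := by omega
    have h2 := hc i ⟨t, ht⟩
    rw [mem_eightVertex] at h2
    simp only [Coloring.square] at h2
    rw [S_succ a b _ i ⟨t, ht⟩, ← add_assoc, ih (by omega)]
    rw [show (⟨t + 1, hj⟩ : Fin (b + 1)) = ⟨(⟨t, ht⟩ : Fin b).1 + 1, by omega⟩ from rfl]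
    rw [h2]
    simp only [add_assoc]

noncomputable def colEquiv : D a b ≃ {c : Coloring (a + 1) (b + 1) // Admissible eightVertex c} where
  toFun d := ⟨build a b d, admissible_build a b d⟩
  invFun c := (fun i => c.1.1 (i, 0), c.1.2)
  left_inv d := by
    refine Prod.ext (funext fun i => ?_) rfl
    show d.1 i + S a b d i 0 = d.1 i
    rw [S_zero, add_zero]
  right_inv c := Subtype.ext (build_eq a b c.2)

lemma gamma_eq : Gamma eightVertex (a + 1) (b + 1) = 2 ^ (a + (a + 1) * b) := by
  rw [Gamma, ← Nat.card_congr (colEquiv a b)]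
  simp [D, Nat.card_eq_fintype_card, pow_add, pow_mul]

end Count

lemma gamma_eq' {m n : ℕ} (hm : 1 ≤ m) (hn : 1 ≤ n) :
    Gamma eightVertex m n = 2 ^ (m * n - 1) := by
  obtain ⟨a, rfl⟩ : ∃ a, m = a + 1 := ⟨m - 1, by omega⟩
  obtain ⟨b, rfl⟩ : ∃ b, n = b + 1 := ⟨n - 1, by omega⟩
  rw [gamma_eq]
  congr 1
  have : (a + 1) * (b + 1) = (a + (a + 1) * b) + 1 := by ring
  omega

lemma tendsto_aux : Tendsto (fun k : ℕ => Real.log (2 ^ (k - 1) : ℕ) / k) atTop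
    (nhds (Real.log 2)) := by
  have h0 : Tendsto (fun k : ℕ => Real.log 2 - Real.log 2 / k) atTop (nhds (Real.log 2)) := by
    have := (tendsto_const_nhds (x := Real.log 2) (f := atTop (α := ℕ))).div_atTop
      tendsto_natCast_atTop_atTop
    simpa using (tendsto_const_nhds (x := Real.log 2) (f := atTop (α := ℕ))).sub this
  refine h0.congr' ?_
  filter_upwards [eventually_ge_atTop 1] with k hk
  have hk0 : (k : ℝ) ≠ 0 := by positivity
  rw [Nat.cast_pow, Real.log_pow]
  have : ((k - 1 : ℕ) : ℝ) = (k : ℝ) - 1 := by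
    push_cast [hk]; ring
  rw [this]
  field_simp
  ring

/-- The spatial entropy of the eight-vertex model is exactly `log 2`. -/
theorem eightVertex_entropy : entropy eightVertex = Real.log 2 := by
  unfold entropy
  have hN : Tendsto (fun p : ℕ × ℕ => p.1 * p.2) (atTop ×ˢ atTop) atTop := by
    refine tendsto_atTop_mono' _ ?_ tendsto_fst
    filter_upwards [tendsto_snd.eventually (eventually_ge_atTop 1)] with p hp
    calc p.1 = p.1 * 1 := (mul_one _).symm
    _ ≤ p.1 * p.2 := Nat.mul_le_mul_left _ hp
  have htend : Tendsto (fun p : ℕ × ℕ => Real.log (Gamma eightVertex p.1 p.2) / (p.1 * p.2))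
      (atTop ×ˢ atTop) (nhds (Real.log 2)) := by
    refine ((tendsto_aux.comp hN).congr' ?_)
    filter_upwards [tendsto_fst.eventually (eventually_ge_atTop 1),
      tendsto_snd.eventually (eventually_ge_atTop 1)] with p h1 h2
    simp only [Function.comp]
    rw [gamma_eq' h1 h2]
    push_cast
    ring_nf
  exact htend.limsup_eq
end

section
/- Let B = {(0,0,0,0), (0,0,1,1), (0,1,0,0), (1,0,1,0)} (tiles numbered 1, 4, 5, 14 under ψ(b,l,t,r) = 1 + 8b + 4l + 2t + r, i.e., {O, R, E₁, Ē₂}) be the two-symbol Wang tile set. Then Γ_{(n+1)×(n+1)}(B) ≤ 4^{8n−16}·(4(n−3))^{2n−9} for all n ≥ 5, and hence h(B) = 0. -/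
open Filter

def tO : WTile := (0,0,0,0)
def tR : WTile := (0,0,1,1)
def tE : WTile := (0,1,0,0)
def tE2 : WTile := (1,0,1,0)

def Bs : Finset WTile := {((0 : Col), (0 : Col), (0 : Col), (0 : Col)), (0, 0, 1, 1),
      (0, 1, 0, 0), (1, 0, 1, 0)}

lemma mem_cases {m n : ℕ} {c : Coloring m n} (hc : Admissible Bs c)
    (i : Fin (m-1)) (j : Fin (n-1)) :
    c.square i j = tO ∨ c.square i j = tR ∨ c.square i j = tE ∨ c.square i j = tE2 := by
  simpa [Bs, tO, tR, tE, tE2] using hc i j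

lemma b_one {m n : ℕ} {c : Coloring m n} (hc : Admissible Bs c)
    {i : Fin (m-1)} {j : Fin (n-1)} (h : (c.square i j).b = 1) : c.square i j = tE2 := by
  rcases mem_cases hc i j with h'|h'|h'|h' <;> rw [h'] at h ⊢ <;>
    first | rfl | (exfalso; revert h; decide)

lemma above_E2 {m n : ℕ} {c : Coloring m n} (hc : Admissible Bs c)
    {i : Fin (m-1)} {j : ℕ} (hj : j < n - 1) (h : (c.square i ⟨j, hj⟩).t = 1)
    (hj1 : j + 1 < n - 1) : c.square i ⟨j+1, hj1⟩ = tE2 := by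
  apply b_one hc
  have : (c.square i ⟨j+1, hj1⟩).b = (c.square i ⟨j, hj⟩).t := rfl
  rw [this, h]

lemma R_unique {m n : ℕ} {c : Coloring m n} (hc : Admissible Bs c)
    {i : Fin (m-1)} {j j' : Fin (n-1)} (h : c.square i j = tR) (h' : c.square i j' = tR) :
    j = j' := by
  have key : ∀ (jj : Fin (n-1)), c.square i jj = tR →
      ∀ k (hk : k < n - 1), jj.1 < k → c.square i ⟨k, hk⟩ = tE2 := by
    intro jj hjj k
    induction k with
    | zero => omega
    | succ k ih =>
      intro hk hlt
      have hk' : k < n - 1 := by omega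
      have ht : (c.square i ⟨k, hk'⟩).t = 1 := by
        rcases Nat.lt_or_ge jj.1 k with h1 | h1
        · rw [ih hk' h1]; rfl
        · have : jj = ⟨k, hk'⟩ := Fin.ext (by simpa using (show jj.1 = k by omega))
          rw [← this, hjj]; rfl
      exact above_E2 hc hk' ht hk
  rcases Nat.lt_trichotomy j.1 j'.1 with hlt | heq | hlt
  · have := key j h j'.1 j'.2 hlt
    rw [Fin.eta] at this
    rw [this] at h'; exact absurd h' (by decide)
  · exact Fin.ext heq
  · have := key j' h' j.1 j.2 hlt
    rw [Fin.eta] at this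
    rw [this] at h; exact absurd h (by decide)

lemma determined {m n : ℕ} (hm : 2 ≤ m) (hn : 2 ≤ n) {c c' : Coloring m n}
    (hc : Admissible Bs c) (hc' : Admissible Bs c')
    (hA : ∀ i : Fin (m-1), c.1 (i, ⟨0, by omega⟩) = c'.1 (i, ⟨0, by omega⟩))
    (hL : ∀ j : Fin (n-1), c.2 (⟨0, by omega⟩, j) = c'.2 (⟨0, by omega⟩, j))
    (hR : ∀ i j, (c.square i j = tR ↔ c'.square i j = tR)) :
    ∀ i j, c.square i j = c'.square i j := by
  have key : ∀ N (i : Fin (m-1)) (j : Fin (n-1)), i.1 + j.1 = N →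
      c.square i j = c'.square i j := by
    intro N
    induction N using Nat.strong_induction_on with
    | _ N ih =>
      rintro ⟨iv, hiv⟩ ⟨jv, hjv⟩ hN
      have hb : (c.square ⟨iv,hiv⟩ ⟨jv,hjv⟩).b = (c'.square ⟨iv,hiv⟩ ⟨jv,hjv⟩).b := by
        match jv, hjv with
        | 0, hjv => exact hA ⟨iv, hiv⟩
        | k+1, hjv =>
          have hk : k < n - 1 := by omega
          have h := ih (iv + k) (by simp only [Fin.val_mk] at hN; omega) ⟨iv,hiv⟩ ⟨k,hk⟩ rfl
          show (c.square ⟨iv,hiv⟩ ⟨k,hk⟩).t = (c'.square ⟨iv,hiv⟩ ⟨k,hk⟩).t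
          rw [h]
      have hl : (c.square ⟨iv,hiv⟩ ⟨jv,hjv⟩).l = (c'.square ⟨iv,hiv⟩ ⟨jv,hjv⟩).l := by
        match iv, hiv with
        | 0, hiv => exact hL ⟨jv, hjv⟩
        | k+1, hiv =>
          have hk : k < m - 1 := by omega
          have h := ih (k + jv) (by simp only [Fin.val_mk] at hN; omega) ⟨k,hk⟩ ⟨jv,hjv⟩ rfl
          show (c.square ⟨k,hk⟩ ⟨jv,hjv⟩).r = (c'.square ⟨k,hk⟩ ⟨jv,hjv⟩).r
          rw [h]
      rcases mem_cases hc ⟨iv,hiv⟩ ⟨jv,hjv⟩ with h1|h1|h1|h1 <;>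
      rcases mem_cases hc' ⟨iv,hiv⟩ ⟨jv,hjv⟩ with h2|h2|h2|h2 <;>
      rw [h1, h2] at hb hl ⊢ <;>
      first
      | rfl
      | (exact absurd hb (by decide))
      | (exact absurd hl (by decide))
      | (have := (hR ⟨iv,hiv⟩ ⟨jv,hjv⟩).mpr (by rw [h2]); rw [h1] at this
         exact absurd this (by decide))
      | (have := (hR ⟨iv,hiv⟩ ⟨jv,hjv⟩).mp (by rw [h1]); rw [h2] at this
         exact absurd this (by decide))
  intro i j
  exact key (i.1 + j.1) i j rfl

lemma coloring_eq {m n : ℕ} (hm : 2 ≤ m) (hn : 2 ≤ n) {c c' : Coloring m n}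
    (h : ∀ i j, c.square i j = c'.square i j) : c = c' := by
  obtain ⟨ch, cv⟩ := c
  obtain ⟨ch', cv'⟩ := c'
  refine Prod.ext ?_ ?_
  · funext p
    obtain ⟨i, j⟩ := p
    rcases Nat.lt_or_ge j.1 (n-1) with hj | hj
    · have := congrArg WTile.b (h i ⟨j.1, hj⟩)
      simpa [Coloring.square, WTile.b] using this
    · have hj' : j.1 = n - 1 := by have := j.2; omega
      have hkk : n - 2 < n - 1 := by omega
      have := congrArg WTile.t (h i ⟨n-2, hkk⟩)
      have e : (⟨n - 2 + 1, by omega⟩ : Fin n) = j := Fin.ext (by simp; omega)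
      simp only [Coloring.square, WTile.t] at this
      rwa [e] at this
  · funext p
    obtain ⟨i, j⟩ := p
    rcases Nat.lt_or_ge i.1 (m-1) with hi | hi
    · have := congrArg WTile.l (h ⟨i.1, hi⟩ j)
      simpa [Coloring.square, WTile.l] using this
    · have hi' : i.1 = m - 1 := by have := i.2; omega
      have hkk : m - 2 < m - 1 := by omega
      have := congrArg WTile.r (h ⟨m-2, hkk⟩ j)
      have e : (⟨m - 2 + 1, by omega⟩ : Fin m) = i := Fin.ext (by simp; omega)
      simp only [Coloring.square, WTile.r] at this
      rwa [e] at this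

lemma gamma_le {m n : ℕ} (hm : 2 ≤ m) (hn : 2 ≤ n) :
    Gamma Bs m n ≤ 2 ^ (m-1) * 2 ^ (n-1) * n ^ (m-1) := by
  classical
  set T := (Fin (m-1) → Col) × (Fin (n-1) → Col) × (Fin (m-1) → Option (Fin (n-1))) with hT
  set F : {c : Coloring m n // Admissible Bs c} → T :=
    fun c => (fun i => c.1.1 (i, ⟨0, by omega⟩),
              fun j => c.1.2 (⟨0, by omega⟩, j),
              fun i => if h : ∃ j, c.1.square i j = tR then some h.choose else none) with hF
  have hinj : Function.Injective F := by
    rintro ⟨c, hc⟩ ⟨c', hc'⟩ hFeq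
    have h1 : ∀ i : Fin (m-1), c.1 (i, ⟨0, by omega⟩) = c'.1 (i, ⟨0, by omega⟩) :=
      fun i => congrFun (congrArg Prod.fst hFeq) i
    have h2 : ∀ j : Fin (n-1), c.2 (⟨0, by omega⟩, j) = c'.2 (⟨0, by omega⟩, j) :=
      fun j => congrFun (congrArg (fun x : T => x.2.1) hFeq) j
    have h3 : ∀ i : Fin (m-1),
        (if h : ∃ j, c.square i j = tR then some h.choose else none)
          = (if h : ∃ j, c'.square i j = tR then some h.choose else none) :=
      fun i => congrFun (congrArg (fun x : T => x.2.2) hFeq) i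
    have hR : ∀ i j, (c.square i j = tR ↔ c'.square i j = tR) := by
      intro i j
      have hfun := h3 i
      constructor
      · intro h
        have hej : ∃ j, c.square i j = tR := ⟨j, h⟩
        rw [dif_pos hej] at hfun
        have hcs : c.square i hej.choose = tR := hej.choose_spec
        have : hej.choose = j := R_unique hc hcs h
        rw [this] at hfun
        by_cases hex : ∃ j', c'.square i j' = tR
        · rw [dif_pos hex] at hfun
          have := Option.some_injective _ hfun
          have hcs' := Exists.choose_spec hex
          rwa [this]
        · rw [dif_neg hex] at hfun; exact absurd hfun (by simp)
      · intro h
        have hej : ∃ j, c'.square i j = tR := ⟨j, h⟩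
        rw [dif_pos hej] at hfun
        have hcs : c'.square i hej.choose = tR := hej.choose_spec
        have : hej.choose = j := R_unique hc' hcs h
        rw [this] at hfun
        by_cases hex : ∃ j', c.square i j' = tR
        · rw [dif_pos hex] at hfun
          have := Option.some_injective _ hfun.symm
          have hcs' := Exists.choose_spec hex
          rwa [this]
        · rw [dif_neg hex] at hfun; exact absurd hfun.symm (by simp)
    exact Subtype.ext (coloring_eq hm hn (determined hm hn hc hc' h1 h2 hR))
  have hcard : Gamma Bs m n ≤ Nat.card T := Nat.card_le_card_of_injective F hinj
  have hTcard : Nat.card T = 2 ^ (m-1) * (2 ^ (n-1) * ((n-1) + 1) ^ (m-1)) := by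
    simp [hT, Nat.card_eq_fintype_card, Fintype.card_fun]
  have hn1 : n - 1 + 1 = n := by omega
  rw [hTcard, hn1] at hcard
  rw [mul_assoc]
  exact hcard

lemma arith (k : ℕ) :
    2 ^ (k+5) * 2 ^ (k+5) * (k+6) ^ (k+5) ≤ 4 ^ (8*k+24) * (4*(k+2)) ^ (2*k+1) := by
  have s1 : 2 ^ (k+5) * 2 ^ (k+5) * (k+6) ^ (k+5)
      ≤ 2 ^ (k+5) * 2 ^ (k+5) * ((4*(k+2))^2) ^ (k+5) := by
    gcongr
    nlinarith
  have s2 : 2 ^ (k+5) * 2 ^ (k+5) * ((4*(k+2))^2) ^ (k+5)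
      = (2 ^ (k+5) * 2 ^ (k+5) * (4*(k+2)) ^ 9) * (4*(k+2)) ^ (2*k+1) := by
    rw [← pow_mul, show 2*(k+5) = 9 + (2*k+1) by ring, pow_add]; ring
  have s3 : (2 ^ (k+5) * 2 ^ (k+5) * (4*(k+2)) ^ 9) * (4*(k+2)) ^ (2*k+1)
      ≤ (2 ^ (k+5) * 2 ^ (k+5) * (4*2^(k+2)) ^ 9) * (4*(k+2)) ^ (2*k+1) := by
    gcongr
    exact le_of_lt Nat.lt_two_pow_self
  have s4 : 2 ^ (k+5) * 2 ^ (k+5) * ((4:ℕ)*2^(k+2)) ^ 9 = 2 ^ (11*k+46) := by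
    rw [show (4:ℕ) = 2^2 by norm_num]
    rw [mul_pow, ← pow_mul, ← pow_mul, ← pow_add, ← pow_add, ← pow_add]
    congr 1; ring
  have s5 : (4:ℕ) ^ (8*k+24) = 2 ^ (16*k+48) := by
    rw [show (4:ℕ) = 2^2 by norm_num, ← pow_mul]; congr 1; ring
  have s6 : (2:ℕ) ^ (11*k+46) ≤ 2 ^ (16*k+48) :=
    Nat.pow_le_pow_right (by norm_num) (by omega)
  rw [s5]
  refine le_trans s1 (le_trans (le_of_eq s2) (le_trans s3 ?_))
  rw [s4] at s3 ⊢
  exact Nat.mul_le_mul_right _ s6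

instance coloringFinite (m n : ℕ) : Finite (Coloring m n) :=
  inferInstanceAs (Finite ((Fin (m - 1) × Fin n → Col) × (Fin m × Fin (n - 1) → Col)))

lemma gamma_pos (m n : ℕ) : 1 ≤ Gamma Bs m n := by
  have : Nonempty {c : Coloring m n // Admissible Bs c} := by
    refine ⟨⟨((fun _ => 0), (fun _ => 0)), fun i j => ?_⟩⟩
    show ((0:Col),(0:Col),(0:Col),(0:Col)) ∈ Bs
    simp [Bs]
  have : 0 < Nat.card {c : Coloring m n // Admissible Bs c} := Nat.card_pos
  exact this

lemma gamma_le_real {m n : ℕ} (hm : 2 ≤ m) (hn : 2 ≤ n) :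
    (Gamma Bs m n : ℝ) ≤ 2^m * 2^n * (n:ℝ)^m := by
  have h := gamma_le hm hn
  have h2 : 2 ^ (m-1) * 2 ^ (n-1) * n ^ (m-1) ≤ 2^m * 2^n * n^m := by
    have a1 : (2:ℕ) ^ (m-1) ≤ 2 ^ m := Nat.pow_le_pow_right (by norm_num) (by omega)
    have a2 : (2:ℕ) ^ (n-1) ≤ 2 ^ n := Nat.pow_le_pow_right (by norm_num) (by omega)
    have a3 : n ^ (m-1) ≤ n ^ m := Nat.pow_le_pow_right (by omega) (by omega)
    exact Nat.mul_le_mul (Nat.mul_le_mul a1 a2) a3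
  have := (Nat.cast_le (α := ℝ)).mpr (le_trans h h2)
  calc (Gamma Bs m n : ℝ) ≤ ((2^m * 2^n * n^m : ℕ) : ℝ) := this
    _ = 2^m * 2^n * (n:ℝ)^m := by push_cast; ring

lemma limsup_zero :
    Filter.limsup (fun p : ℕ × ℕ => Real.log (Gamma Bs p.1 p.2) / (p.1 * p.2))
      (Filter.atTop ×ˢ Filter.atTop) = 0 := by
  apply Filter.Tendsto.limsup_eq
  have h0 : ∀ p : ℕ × ℕ, (0:ℝ) ≤ Real.log (Gamma Bs p.1 p.2) / (p.1 * p.2) := by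
    intro p
    apply div_nonneg
    · apply Real.log_nonneg
      exact_mod_cast gamma_pos p.1 p.2
    · positivity
  have hub : ∀ᶠ p : ℕ × ℕ in atTop ×ˢ atTop,
      Real.log (Gamma Bs p.1 p.2) / (p.1 * p.2) ≤
        Real.log 2 / p.2 + Real.log 2 / p.1 + Real.log p.2 / p.2 := by
    filter_upwards [(eventually_ge_atTop 2).prod_inl (atTop : Filter ℕ),
      (eventually_ge_atTop 2).prod_inr (atTop : Filter ℕ)] with p hm hn
    obtain ⟨m, n⟩ := p
    simp only at hm hn ⊢
    have hmR : (2:ℝ) ≤ (m:ℝ) := by exact_mod_cast hm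
    have hnR : (2:ℝ) ≤ (n:ℝ) := by exact_mod_cast hn
    have hmpos : (0:ℝ) < (m:ℝ) := by linarith
    have hnpos : (0:ℝ) < (n:ℝ) := by linarith
    have hg1 : (1:ℝ) ≤ (Gamma Bs m n : ℝ) := by exact_mod_cast gamma_pos m n
    have hlog : Real.log (Gamma Bs m n) ≤
        (m:ℝ) * Real.log 2 + (n:ℝ) * Real.log 2 + (m:ℝ) * Real.log n := by
      have h1 := Real.log_le_log (by linarith) (gamma_le_real hm hn)
      rwa [Real.log_mul (by positivity) (by positivity),
        Real.log_mul (by positivity) (by positivity),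
        Real.log_pow, Real.log_pow, Real.log_pow] at h1
    have e : ((m:ℝ) * Real.log 2 + (n:ℝ) * Real.log 2 + (m:ℝ) * Real.log n) / ((m:ℝ) * (n:ℝ))
        = Real.log 2 / (n:ℝ) + Real.log 2 / (m:ℝ) + Real.log (n:ℝ) / (n:ℝ) := by
      field_simp
    calc Real.log (Gamma Bs m n) / ((m:ℝ) * (n:ℝ))
        ≤ ((m:ℝ) * Real.log 2 + (n:ℝ) * Real.log 2 + (m:ℝ) * Real.log n) / ((m:ℝ) * (n:ℝ)) := by
          gcongr
      _ = Real.log 2 / (n:ℝ) + Real.log 2 / (m:ℝ) + Real.log (n:ℝ) / (n:ℝ) := e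
  have t1 : Filter.Tendsto (fun p : ℕ × ℕ => Real.log 2 / (p.2:ℝ))
      (atTop ×ˢ atTop) (nhds 0) :=
    (tendsto_const_div_atTop_nhds_zero_nat (Real.log 2)).comp tendsto_snd
  have t2 : Filter.Tendsto (fun p : ℕ × ℕ => Real.log 2 / (p.1:ℝ))
      (atTop ×ˢ atTop) (nhds 0) :=
    (tendsto_const_div_atTop_nhds_zero_nat (Real.log 2)).comp tendsto_fst
  have t3 : Filter.Tendsto (fun p : ℕ × ℕ => Real.log (p.2:ℝ) / (p.2:ℝ))
      (atTop ×ˢ atTop) (nhds 0) := by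
    have hlog : Filter.Tendsto (fun x : ℝ => Real.log x / x) atTop (nhds 0) := by
      simpa [Function.comp] using Real.isLittleO_log_id_atTop.tendsto_div_nhds_zero
    exact (hlog.comp tendsto_natCast_atTop_atTop).comp tendsto_snd
  have tu : Filter.Tendsto
      (fun p : ℕ × ℕ => Real.log 2 / (p.2:ℝ) + Real.log 2 / (p.1:ℝ) + Real.log (p.2:ℝ) / (p.2:ℝ))
      (atTop ×ˢ atTop) (nhds 0) := by
    have := (t1.add t2).add t3
    simpa using this
  exact tendsto_of_tendsto_of_tendsto_of_le_of_le' tendsto_const_nhds tu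
    (Filter.Eventually.of_forall h0) hub

/-- Proposition 4.5: for the tile set `{O, R, E₁, Ē₂}` (tiles 1, 4, 5, 14),
`Γ_{(n+1)×(n+1)}(B) ≤ 4^{8n−16} (4(n−3))^{2n−9}` for `n ≥ 5`, and the
spatial entropy vanishes. -/
theorem entropy_zero_O_R_E1_E2bar
    (B : Finset WTile)
    (hB : B = ({((0 : Col), (0 : Col), (0 : Col), (0 : Col)), (0, 0, 1, 1),
      (0, 1, 0, 0), (1, 0, 1, 0)} : Finset WTile)) :
    (∀ n : ℕ, 5 ≤ n →
        Gamma B (n + 1) (n + 1) ≤ 4 ^ (8 * n - 16) * (4 * (n - 3)) ^ (2 * n - 9)) ∧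
      entropy B = 0 := by
  have hBs : B = Bs := hB
  subst hBs
  constructor
  · intro n hn
    obtain ⟨k, rfl⟩ : ∃ k, n = k + 5 := ⟨n - 5, by omega⟩
    have e1 : 8 * (k+5) - 16 = 8*k+24 := by omega
    have e2 : 2 * (k+5) - 9 = 2*k+1 := by omega
    have e3 : (k+5) - 3 = k+2 := by omega
    rw [e1, e2, e3]
    have hg := gamma_le (m := k+5+1) (n := k+5+1) (by omega) (by omega)
    have e4 : k+5+1-1 = k+5 := by omega
    rw [e4] at hg
    have e5 : k+5+1 = k+6 := by omega
    rw [e5] at hg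
    exact le_trans hg (arith k)
  · show limsup (fun p : ℕ × ℕ => Real.log (Gamma Bs p.1 p.2) / (p.1 * p.2))
      (atTop ×ˢ atTop) = 0
    exact limsup_zero
end
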